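/- The Schur complement of 𝒞 in the dissipation matrix Ĥ is block diagonal: 𝒜 − ℬ𝒞⁻¹ℬᵀ = diag(Ã_1, ..., Ã_N), where each Ã_k equals the hydrodynamic block A_k except that its (5,5) entry is reduced by Ē_mag², i.e., Ã_k,(5,5) = Ĥ_k,(5,5) − Ē_mag². -/

import Mathlib

/-!
Let `e` be the indicator of the energy rows `(k, 5)` and `b = (⟨B₁⟩, ⟨B₂⟩, ⟨B₃⟩, ⟨ψ⟩)`. Then
`ℬ = e (τ⁺ b)ᵀ`, so `ℬ (τ⁺ I)⁻¹ ℬᵀ = τ⁺ |b|² e eᵀ = Ē_mag² e eᵀ`; and `𝒜` is `diag(Ã_k)` plus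
exactly the same matrix `Ē_mag² e eᵀ`, since every block of `𝒜`, diagonal or not, carries
`Ē_mag²` in its `(5,5)` entry.
-/
open Matrix

/-- The hydrodynamic 5×5 block `A_k` of the multi-ion GLM-MHD dissipation
matrix (with additive magnetic term `Emag2` in the `(5,5)` entry; taking
`Emag2 = 0` gives the block `Ã_k`). -/
noncomputable def Ablock (ρ pbar pstar γ Ebar Emag2 : ℝ) (v : Fin 3 → ℝ) :
    Matrix (Fin 5) (Fin 5) ℝ :=
  !![ρ, ρ * v 0, ρ * v 1, ρ * v 2, Ebar;
     ρ * v 0, ρ * v 0 * v 0 + pbar, ρ * v 0 * v 1, ρ * v 0 * v 2,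
       (Ebar + pbar) * v 0;
     ρ * v 1, ρ * v 1 * v 0, ρ * v 1 * v 1 + pbar, ρ * v 1 * v 2,
       (Ebar + pbar) * v 1;
     ρ * v 2, ρ * v 2 * v 0, ρ * v 2 * v 1, ρ * v 2 * v 2 + pbar,
       (Ebar + pbar) * v 2;
     Ebar, (Ebar + pbar) * v 0, (Ebar + pbar) * v 1, (Ebar + pbar) * v 2,
       (1 / ρ) * (pstar ^ 2 / (γ - 1) + Ebar ^ 2)
         + pbar * (v 0 ^ 2 + v 1 ^ 2 + v 2 ^ 2) + Emag2]

/-- The GLM block vector `(⟨B₁⟩, ⟨B₂⟩, ⟨B₃⟩, ⟨ψ⟩)`. -/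
def bvec (Bavg : Fin 3 → ℝ) (ψ : ℝ) : Fin 4 → ℝ := ![Bavg 0, Bavg 1, Bavg 2, ψ]

/-- The upper-left block `𝒜 ∈ ℝ^{5N×5N}`: diagonal blocks `A_k`,
off-diagonal blocks with single nonzero `(5,5)` entry `Ē_mag²`. -/
noncomputable def Amat (N : ℕ) (ρln pbar pstar γ Ebar : Fin N → ℝ)
    (v : Fin N → Fin 3 → ℝ) (τ : ℝ) (Bavg : Fin 3 → ℝ) (ψ : ℝ) :
    Matrix (Fin N × Fin 5) (Fin N × Fin 5) ℝ :=
  let Emag2 : ℝ := τ * ((∑ i, (Bavg i) ^ 2) + ψ ^ 2)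
  fun i j =>
    if i.1 = j.1 then
      Ablock (ρln i.1) (pbar i.1) (pstar i.1) (γ i.1) (Ebar i.1) Emag2 (v i.1)
        i.2 j.2
    else if i.2 = 4 ∧ j.2 = 4 then Emag2 else 0

/-- The off-diagonal block `ℬ ∈ ℝ^{5N×4}`: stacked blocks whose only nonzero
row is the 5th row `(τ⁺⟨B₁⟩, τ⁺⟨B₂⟩, τ⁺⟨B₃⟩, τ⁺⟨ψ⟩)`. -/
noncomputable def Bmat (N : ℕ) (τ : ℝ) (Bavg : Fin 3 → ℝ) (ψ : ℝ) :
    Matrix (Fin N × Fin 5) (Fin 4) ℝ :=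
  fun i c => if i.2 = 4 then τ * bvec Bavg ψ c else 0

namespace Matrix

variable {m n K : Type*} [Fintype n] [DecidableEq n] [Field K]

theorem inv_smul_one (k : K) : (k • (1 : Matrix n n K))⁻¹ = k⁻¹ • 1 := by
  rcases eq_or_ne k 0 with rfl | hk
  · simp
  · exact inv_eq_right_inv <| by
      rw [smul_mul_smul_comm, Matrix.mul_one, mul_inv_cancel₀ hk, one_smul]

theorem vecMulVec_smul_mul_inv_smul_one_mul_transpose (u : m → K) (w : n → K) (k : K) :
    vecMulVec u (k • w) * (k • (1 : Matrix n n K))⁻¹ * (vecMulVec u (k • w))ᵀ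
      = (k * (w ⬝ᵥ w)) • vecMulVec u u := by
  rw [inv_smul_one, Matrix.mul_smul, Matrix.mul_one, transpose_vecMulVec, smul_mul,
    vecMulVec_mul_vecMulVec, vecMulVec_smul, smul_smul, dotProduct_smul, smul_dotProduct,
    smul_eq_mul, smul_eq_mul, ← mul_assoc, ← mul_assoc, inv_mul_mul_self]

end Matrix

def energyIndicator (N : ℕ) : Fin N × Fin 5 → ℝ := fun i => if i.2 = 4 then 1 else 0

theorem Bmat_eq_vecMulVec (N : ℕ) (τ : ℝ) (Bavg : Fin 3 → ℝ) (ψ : ℝ) :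
    Bmat N τ Bavg ψ = vecMulVec (energyIndicator N) (τ • bvec Bavg ψ) := by
  ext i c
  by_cases hi : i.2 = 4 <;> simp [Bmat, energyIndicator, vecMulVec_apply, hi]

theorem bvec_dotProduct_self (Bavg : Fin 3 → ℝ) (ψ : ℝ) :
    bvec Bavg ψ ⬝ᵥ bvec Bavg ψ = ∑ i, Bavg i ^ 2 + ψ ^ 2 := by
  simp [bvec, dotProduct, Fin.sum_univ_succ, sq, add_assoc]

theorem Ablock_eq_add_single (ρ pbar pstar γ Ebar Emag2 : ℝ) (v : Fin 3 → ℝ) :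
    Ablock ρ pbar pstar γ Ebar Emag2 v
      = Ablock ρ pbar pstar γ Ebar 0 v + single 4 4 Emag2 := by
  ext a b
  fin_cases a <;> fin_cases b <;> simp [Ablock, add_assoc]

noncomputable def AtildeMat (N : ℕ) (ρln pbar pstar γ Ebar : Fin N → ℝ)
    (v : Fin N → Fin 3 → ℝ) :
    Matrix (Fin N × Fin 5) (Fin N × Fin 5) ℝ :=
  fun i j => if i.1 = j.1 then
    Ablock (ρln i.1) (pbar i.1) (pstar i.1) (γ i.1) (Ebar i.1) 0 (v i.1) i.2 j.2 else 0

theorem Amat_eq_add (N : ℕ) (ρln pbar pstar γ Ebar : Fin N → ℝ) (v : Fin N → Fin 3 → ℝ)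
    (τ : ℝ) (Bavg : Fin 3 → ℝ) (ψ : ℝ) :
    Amat N ρln pbar pstar γ Ebar v τ Bavg ψ
      = AtildeMat N ρln pbar pstar γ Ebar v
        + (τ * (∑ i, Bavg i ^ 2 + ψ ^ 2)) • vecMulVec (energyIndicator N) (energyIndicator N) := by
  ext i j
  by_cases hij : i.1 = j.1 <;> by_cases hi : i.2 = 4 <;> by_cases hj : j.2 = 4 <;>
    simp [Amat, AtildeMat, Ablock_eq_add_single _ _ _ _ _ (τ * _), energyIndicator,
      vecMulVec_apply, single_apply, hij, hi, hj, eq_comm]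

theorem schur_complement_block_diagonal_general (N : ℕ)
    (ρln pbar pstar γ Ebar : Fin N → ℝ) (v : Fin N → Fin 3 → ℝ)
    (τ : ℝ) (Bavg : Fin 3 → ℝ) (ψ : ℝ) :
    Amat N ρln pbar pstar γ Ebar v τ Bavg ψ
      - Bmat N τ Bavg ψ * (τ • (1 : Matrix (Fin 4) (Fin 4) ℝ))⁻¹
          * (Bmat N τ Bavg ψ)ᵀ
      = fun i j =>
          if i.1 = j.1 then
            Ablock (ρln i.1) (pbar i.1) (pstar i.1) (γ i.1) (Ebar i.1) 0
              (v i.1) i.2 j.2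
          else 0 := by
  rw [Amat_eq_add, Bmat_eq_vecMulVec, vecMulVec_smul_mul_inv_smul_one_mul_transpose,
    bvec_dotProduct_self, add_sub_cancel_right]
  rfl

/-- The Schur complement of `𝒞 = τ⁺I₄` in `Ĥ` is block diagonal:
`𝒜 − ℬ𝒞⁻¹ℬᵀ = diag(Ã_1, …, Ã_N)`, where `Ã_k` equals `A_k` except that its
`(5,5)` entry is reduced by `Ē_mag²` (i.e. `A_k` with `Emag2 = 0`). -/
theorem schur_complement_block_diagonal (N : ℕ)
    (ρln pbar pstar γ Ebar : Fin N → ℝ) (v : Fin N → Fin 3 → ℝ)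
    (τ : ℝ) (hτ : 0 < τ) (Bavg : Fin 3 → ℝ) (ψ : ℝ) :
    Amat N ρln pbar pstar γ Ebar v τ Bavg ψ
      - Bmat N τ Bavg ψ * (τ • (1 : Matrix (Fin 4) (Fin 4) ℝ))⁻¹
          * (Bmat N τ Bavg ψ)ᵀ
      = fun i j =>
          if i.1 = j.1 then
            Ablock (ρln i.1) (pbar i.1) (pstar i.1) (γ i.1) (Ebar i.1) 0
              (v i.1) i.2 j.2
          else 0 :=
  schur_complement_block_diagonal_general N ρln pbar pstar γ Ebar v τ Bavg ψ
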